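/- arXiv:2510.11446 — 3 statements merged into one kernel-verified Lean document; each statement's English description precedes it below -/
import Mathlib

section
/- Let 1 ≤ a < b ≤ n, l ≥ 2, and a = i_0 < i_1 < ... < i_l = b a strictly increasing chain. Define τ_1 = (i_{l-1} b)(i_{l-2} i_{l-1})···(i_1 i_2)(a i_1) and for 2 ≤ k ≤ l, τ_k = (i_{l-k} i_{l-k+1}) τ_{k-1}... i.e. τ_k = (i_{l-k} i_{l-k+1})···(i_{l-2} i_{l-1})(i_{l-1} b)(i_{l-2} i_{l-1})···(i_1 i_2)(a i_1). Then inv(τ_k) = inv(τ_{k-1}) + 1 for each k ∈ {2,...,l}. -/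
open Equiv

/-- The number of inversions of a permutation of `{0, …, n-1}` (= Coxeter length). -/
def invNum {n : ℕ} (π : Equiv.Perm (Fin n)) : ℕ :=
  (Finset.univ.filter (fun p : Fin n × Fin n => p.1 < p.2 ∧ π p.2 < π p.1)).card

/-- The inversion set of a permutation. -/
def InvSet {n : ℕ} (π : Equiv.Perm (Fin n)) : Set (Fin n × Fin n) :=
  {p | p.1 < p.2 ∧ π p.2 < π p.1}

/-- Right weak order: `u ≤_R v` iff `ℓ(u) + ℓ(u⁻¹v) = ℓ(v)`. -/
def wleR {n : ℕ} (u v : Equiv.Perm (Fin n)) : Prop :=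
  invNum u + invNum (u⁻¹ * v) = invNum v

/-- The left-reflection set `T_L(σ)` of transpositions `t` with `ℓ(tσ) < ℓ(σ)`. -/
def TL {n : ℕ} (σ : Equiv.Perm (Fin n)) : Set (Equiv.Perm (Fin n)) :=
  {t | t.IsSwap ∧ invNum (t * σ) < invNum σ}

/-- `σ_k = (i_k i_{k+1}) ⋯ (i_1 i_2)(i_0 i_1)` (product written left to right). -/
def sigmaChain {n : ℕ} (i : ℕ → Fin n) (k : ℕ) : Equiv.Perm (Fin n) :=
  (((List.range (k + 1)).map (fun r => Equiv.swap (i r) (i (r + 1)))).reverse).prod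

/-- `τ_k = (i_{l-k} i_{l-k+1}) ⋯ (i_{l-2} i_{l-1}) · (i_{l-1} i_l)(i_{l-2} i_{l-1}) ⋯ (i_0 i_1)`,
so `τ_1 = (i_{l-1} b)(i_{l-2} i_{l-1}) ⋯ (a i_1) = σ_{l-1}`. -/
def tauChain {n : ℕ} (i : ℕ → Fin n) (l k : ℕ) : Equiv.Perm (Fin n) :=
  (((List.range (k - 1)).map
      (fun m => Equiv.swap (i (l - k + m)) (i (l - k + m + 1)))).prod) * sigmaChain i (l - 1)


/-- Auxiliary involution on pairs. -/
def emap {n : ℕ} (π : Equiv.Perm (Fin n)) (x y P Q : Fin n) (pq : Fin n × Fin n) :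
    Fin n × Fin n :=
  if x < π pq.1 ∧ π pq.1 < y then
    (if pq.2 = P then (pq.1, Q) else if pq.2 = Q then (pq.1, P) else pq)
  else pq

lemma emap_invol {n : ℕ} (π : Equiv.Perm (Fin n)) (x y P Q : Fin n) (hPQ : P ≠ Q)
    (pq : Fin n × Fin n) : emap π x y P Q (emap π x y P Q pq) = pq := by
  obtain ⟨p, q⟩ := pq
  by_cases hv : x < π p ∧ π p < y
  · by_cases h1 : q = P
    · simp only [emap, hv, if_true, h1, if_pos rfl, if_neg (Ne.symm hPQ), if_pos rfl]
      simp [hv, h1, Ne.symm hPQ]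
    · by_cases h2 : q = Q
      · simp [emap, hv, h1, h2, Ne.symm hPQ]
      · simp [emap, hv, h1, h2]
  · simp [emap, hv]

lemma key {n : ℕ} (π : Equiv.Perm (Fin n)) (x y : Fin n) (hxy : x < y)
    (hPQ : π⁻¹ x < π⁻¹ y)
    (H : ∀ z : Fin n, x < z → z < y → π⁻¹ z < π⁻¹ x) :
    invNum (Equiv.swap x y * π) = invNum π + 1 := by
  classical
  set σ := Equiv.swap x y * π with hσdef
  set P := π⁻¹ x with hPdef
  set Q := π⁻¹ y with hQdef
  have hπP : π P = x := π.apply_symm_apply x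
  have hπQ : π Q = y := π.apply_symm_apply y
  have hPQne : P ≠ Q := ne_of_lt hPQ
  have hσapp : ∀ p, σ p = if π p = x then y else if π p = y then x else π p := by
    intro p; rw [hσdef, Equiv.Perm.mul_apply, Equiv.swap_apply_def]
  have hσP : σ P = y := by rw [hσapp]; simp [hπP]
  have hσQ : σ Q = x := by rw [hσapp]; simp [hπQ, (ne_of_lt hxy).symm]
  have hσeq : ∀ p, π p ≠ x → π p ≠ y → σ p = π p := by
    intro p h1 h2; rw [hσapp]; simp [h1, h2]
  have hpx : ∀ p, π p = x ↔ p = P :=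
    fun p => ⟨fun h => π.injective (h.trans hπP.symm), fun h => h ▸ hπP⟩
  have hpy : ∀ p, π p = y ↔ p = Q :=
    fun p => ⟨fun h => π.injective (h.trans hπQ.symm), fun h => h ▸ hπQ⟩
  have tri : ∀ v : Fin n, v ≠ x → v ≠ y → ¬(x < v ∧ v < y) → v < x ∨ y < v := by
    intro v h1 h2 h3
    rcases lt_trichotomy v x with h | h | h
    · exact Or.inl h
    · exact absurd h h1
    · rcases lt_trichotomy v y with h' | h' | h'
      · exact absurd ⟨h, h'⟩ h3
      · exact absurd h' h2
      · exact Or.inr h'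
  have Hposn : ∀ p, x < π p → π p < y → p < P := by
    intro p h1 h2
    have := H (π p) h1 h2
    rwa [Equiv.Perm.inv_def, Equiv.symm_apply_apply] at this
  have claim : ∀ p q : Fin n, (p, q) ≠ (P, Q) →
      ((p < q ∧ π q < π p) ↔
        ((emap π x y P Q (p, q)).1 < (emap π x y P Q (p, q)).2 ∧
          σ (emap π x y P Q (p, q)).2 < σ (emap π x y P Q (p, q)).1)) := by
    intro p q hne
    by_cases hv : x < π p ∧ π p < y
    · have hpP : p < P := Hposn p hv.1 hv.2
      have hπpx : π p ≠ x := ne_of_gt hv.1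
      have hπpy : π p ≠ y := ne_of_lt hv.2
      have hσp : σ p = π p := hσeq p hπpx hπpy
      by_cases hqP : q = P
      · simp only [emap, if_pos hv, if_pos hqP]
        subst hqP
        constructor
        · intro _
          exact ⟨lt_trans hpP hPQ, by rw [hσQ, hσp]; exact hv.1⟩
        · intro _
          exact ⟨hpP, by rw [hπP]; exact hv.1⟩
      · by_cases hqQ : q = Q
        · simp only [emap, if_pos hv, if_neg hqP, if_pos hqQ]
          subst hqQ
          constructor
          · rintro ⟨-, h2⟩
            rw [hπQ] at h2
            exact absurd (lt_trans h2 hv.2) (lt_irrefl _)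
          · rintro ⟨-, h2⟩
            rw [hσP, hσp] at h2
            exact absurd (lt_trans h2 hv.2) (lt_irrefl _)
        · simp only [emap, if_pos hv, if_neg hqP, if_neg hqQ]
          have h1 : π q ≠ x := fun h => hqP ((hpx q).mp h)
          have h2 : π q ≠ y := fun h => hqQ ((hpy q).mp h)
          rw [hσeq q h1 h2, hσp]
    · simp only [emap, if_neg hv]
      refine and_congr_right (fun hpq => ?_)
      by_cases hpx' : π p = x
      · have hpP : p = P := (hpx p).mp hpx'
        have hσp : σ p = y := hpP ▸ hσP
        have hq1 : π q ≠ x := by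
          intro h
          have : q = P := (hpx q).mp h
          rw [← hpP] at this
          exact absurd (this ▸ hpq) (lt_irrefl _)
        have hq2 : π q ≠ y := by
          intro h
          have : q = Q := (hpy q).mp h
          exact hne (by rw [hpP, this])
        have hq3 : ¬(x < π q ∧ π q < y) := by
          rintro ⟨a', b'⟩
          have := Hposn q a' b'
          rw [← hpP] at this
          exact absurd hpq (asymm this)
        have hσq : σ q = π q := hσeq q hq1 hq2
        rw [hpx', hσp, hσq]
        rcases tri (π q) hq1 hq2 hq3 with h | h
        · exact iff_of_true h (lt_trans h hxy)
        · exact iff_of_false (not_lt.mpr (le_of_lt (lt_trans hxy h))) (not_lt.mpr (le_of_lt h))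
      · by_cases hpy' : π p = y
        · have hpQ : p = Q := (hpy p).mp hpy'
          have hσp : σ p = x := hpQ ▸ hσQ
          have hq2 : π q ≠ y := by
            intro h
            have : q = Q := (hpy q).mp h
            rw [← hpQ] at this
            exact absurd (this ▸ hpq) (lt_irrefl _)
          have hq1 : π q ≠ x := by
            intro h
            have hq : q = P := (hpx q).mp h
            rw [hq, hpQ] at hpq
            exact absurd hpq (asymm hPQ)
          have hq3 : ¬(x < π q ∧ π q < y) := by
            rintro ⟨a', b'⟩
            have h1 := Hposn q a' b'
            have : q < Q := lt_trans h1 hPQ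
            rw [← hpQ] at this
            exact absurd hpq (asymm this)
          have hσq : σ q = π q := hσeq q hq1 hq2
          rw [hpy', hσp, hσq]
          rcases tri (π q) hq1 hq2 hq3 with h | h
          · exact iff_of_true (lt_trans h hxy) h
          · exact iff_of_false (not_lt.mpr (le_of_lt h)) (not_lt.mpr (le_of_lt (lt_trans hxy h)))
        · have hσp : σ p = π p := hσeq p hpx' hpy'
          by_cases hqx' : π q = x
          · have hqP : q = P := (hpx q).mp hqx'
            have hσq : σ q = y := hqP ▸ hσP
            rw [hqx', hσp, hσq]
            rcases tri (π p) hpx' hpy' hv with h | h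
            · exact iff_of_false (not_lt.mpr (le_of_lt h)) (not_lt.mpr (le_of_lt (lt_trans h hxy)))
            · exact iff_of_true (lt_trans hxy h) h
          · by_cases hqy' : π q = y
            · have hqQ : q = Q := (hpy q).mp hqy'
              have hσq : σ q = x := hqQ ▸ hσQ
              rw [hqy', hσp, hσq]
              rcases tri (π p) hpx' hpy' hv with h | h
              · exact iff_of_false (not_lt.mpr (le_of_lt (lt_trans h hxy))) (not_lt.mpr (le_of_lt h))
              · exact iff_of_true h (lt_trans hxy h)
            · rw [hσeq q hqx' hqy', hσp]
  -- now the counting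
  have hePQ : emap π x y P Q (P, Q) = (P, Q) := by
    have : ¬(x < π P ∧ π P < y) := by rw [hπP]; rintro ⟨h, -⟩; exact lt_irrefl _ h
    simp [emap, this]
  have hPQnotT : ¬((P : Fin n) < Q ∧ π Q < π P) := by
    rintro ⟨-, h⟩
    rw [hπP, hπQ] at h
    exact absurd (lt_trans h hxy) (lt_irrefl _)
  unfold invNum
  set T := Finset.univ.filter (fun p : Fin n × Fin n => p.1 < p.2 ∧ π p.2 < π p.1) with hT
  set S := Finset.univ.filter (fun p : Fin n × Fin n => p.1 < p.2 ∧ σ p.2 < σ p.1) with hS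
  have hPQS : (P, Q) ∈ S := by
    rw [hS, Finset.mem_filter]
    exact ⟨Finset.mem_univ _, hPQ, by rw [hσP, hσQ]; exact hxy⟩
  have himg : T.image (emap π x y P Q) = S.erase (P, Q) := by
    ext z
    simp only [Finset.mem_image, Finset.mem_erase, hT, hS, Finset.mem_filter,
      Finset.mem_univ, true_and]
    constructor
    · rintro ⟨w, hw, rfl⟩
      have hwne : w ≠ (P, Q) := by
        rintro rfl; exact hPQnotT hw
      obtain ⟨p, q⟩ := w
      refine ⟨?_, (claim p q hwne).mp hw⟩
      intro h
      apply hwne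
      have := congrArg (emap π x y P Q) h
      rw [emap_invol π x y P Q hPQne, hePQ] at this
      exact this
    · rintro ⟨hzne, hz⟩
      refine ⟨emap π x y P Q z, ?_, emap_invol π x y P Q hPQne z⟩
      have hwne : emap π x y P Q z ≠ (P, Q) := by
        intro h
        apply hzne
        have := congrArg (emap π x y P Q) h
        rw [emap_invol π x y P Q hPQne, hePQ] at this
        exact this
      have := (claim (emap π x y P Q z).1 (emap π x y P Q z).2 (by rwa [Prod.mk.eta])).mpr
      rw [Prod.mk.eta, emap_invol π x y P Q hPQne] at this
      exact this hz
  have hinj : Set.InjOn (emap π x y P Q) T := by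
    intro a _ b _ h
    have := congrArg (emap π x y P Q) h
    rwa [emap_invol π x y P Q hPQne, emap_invol π x y P Q hPQne] at this
  have h1 : T.card = (S.erase (P, Q)).card := by
    rw [← himg, Finset.card_image_of_injOn hinj]
  rw [Finset.card_erase_of_mem hPQS] at h1
  have h2 : 0 < S.card := Finset.card_pos.mpr ⟨(P, Q), hPQS⟩
  omega


lemma sigmaChain_zero {n : ℕ} (i : ℕ → Fin n) :
    sigmaChain i 0 = Equiv.swap (i 0) (i 1) := by
  simp [sigmaChain, List.range_succ]

lemma sigmaChain_succ {n : ℕ} (i : ℕ → Fin n) (k : ℕ) :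
    sigmaChain i (k + 1) = Equiv.swap (i (k + 1)) (i (k + 2)) * sigmaChain i k := by
  unfold sigmaChain
  rw [show k + 1 + 1 = (k+1) + 1 from rfl, List.range_succ, List.map_append,
    List.reverse_append]
  simp

lemma tauChain_one {n : ℕ} (i : ℕ → Fin n) (l : ℕ) :
    tauChain i l 1 = sigmaChain i (l - 1) := by
  simp [tauChain]

lemma tauChain_succ {n : ℕ} (i : ℕ → Fin n) (l k : ℕ) (h2 : 2 ≤ k) (hkl : k ≤ l) :
    tauChain i l k = Equiv.swap (i (l - k)) (i (l - k + 1)) * tauChain i l (k - 1) := by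
  unfold tauChain
  obtain ⟨m, rfl⟩ : ∃ m, k = m + 2 := ⟨k - 2, by omega⟩
  rw [show m + 2 - 1 = m + 1 from rfl, show m + 1 - 1 = m from rfl]
  rw [List.range_succ_eq_map, List.map_cons, List.prod_cons, List.map_map, mul_assoc]
  have htail : List.map ((fun m_1 => Equiv.swap (i (l - (m + 2) + m_1)) (i (l - (m + 2) + m_1 + 1))) ∘ Nat.succ) (List.range m)
      = List.map (fun m_1 => Equiv.swap (i (l - (m + 1) + m_1)) (i (l - (m + 1) + m_1 + 1))) (List.range m) := by
    apply List.map_congr_left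
    intro r _
    have e1 : l - (m + 2) + Nat.succ r = l - (m + 1) + r := by omega
    have e2 : l - (m + 2) + Nat.succ r + 1 = l - (m + 1) + r + 1 := by omega
    simp only [Function.comp_apply, e1, e2]
  rw [htail]
  norm_num

section Actions

variable {n : ℕ} {i : ℕ → Fin n} {l : ℕ}

lemma chain_mono (hmono : ∀ r, r < l → i r < i (r + 1)) :
    ∀ ⦃r s : ℕ⦄, r < s → s ≤ l → i r < i s := by
  intro r s
  induction s with
  | zero => omega
  | succ s ih =>
    intro hrs hsl
    rcases Nat.lt_or_ge r s with h | h
    · exact lt_trans (ih h (by omega)) (hmono s (by omega))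
    · have : r = s := by omega
      subst this
      exact hmono r (by omega)

lemma chain_ne (hmono : ∀ r, r < l → i r < i (r + 1)) :
    ∀ ⦃r s : ℕ⦄, r ≠ s → r ≤ l → s ≤ l → i r ≠ i s := by
  intro r s hne hr hs
  rcases Nat.lt_or_ge r s with h | h
  · exact ne_of_lt (chain_mono hmono h hs)
  · exact (ne_of_lt (chain_mono hmono (by omega) hr)).symm

lemma sigma_fix (hmono : ∀ r, r < l → i r < i (r + 1)) :
    ∀ j, j + 1 ≤ l → ∀ z : Fin n, (∀ r, r ≤ j + 1 → z ≠ i r) → sigmaChain i j z = z := by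
  intro j
  induction j with
  | zero =>
    intro _ z hz
    rw [sigmaChain_zero]
    exact Equiv.swap_apply_of_ne_of_ne (hz 0 (by omega)) (hz 1 (by omega))
  | succ j ih =>
    intro hjl z hz
    rw [sigmaChain_succ, Equiv.Perm.mul_apply, ih (by omega) z (fun r hr => hz r (by omega))]
    exact Equiv.swap_apply_of_ne_of_ne (hz (j + 1) (by omega)) (hz (j + 2) (by omega))

lemma sigma_app (hmono : ∀ r, r < l → i r < i (r + 1)) :
    ∀ j, j + 1 ≤ l → ∀ r, r ≤ j → sigmaChain i j (i (r + 1)) = i r := by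
  intro j
  induction j with
  | zero =>
    intro hl r hr
    interval_cases r
    rw [sigmaChain_zero]
    exact Equiv.swap_apply_right _ _
  | succ j ih =>
    intro hjl r hr
    rw [sigmaChain_succ, Equiv.Perm.mul_apply]
    rcases Nat.lt_or_ge r (j + 1) with h | h
    · rw [ih (by omega) r (by omega)]
      exact Equiv.swap_apply_of_ne_of_ne
        (chain_ne hmono (by omega) (by omega) (by omega))
        (chain_ne hmono (by omega) (by omega) (by omega))
    · have : r = j + 1 := by omega
      subst this
      rw [sigma_fix hmono j (by omega) (i (j + 2))
        (fun s hs => chain_ne hmono (by omega) (by omega) (by omega))]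
      exact Equiv.swap_apply_right _ _

lemma tau_facts (hmono : ∀ r, r < l → i r < i (r + 1)) (hl : 2 ≤ l) :
    ∀ k, 1 ≤ k → k ≤ l - 1 →
      (tauChain i l k (i l) = i (l - k)) ∧
      (∀ r, 1 ≤ r → r ≤ l - k → tauChain i l k (i r) = i (r - 1)) ∧
      (∀ z : Fin n, (∀ s, s ≤ l → z ≠ i s) → tauChain i l k z = z) := by
  intro k
  induction k with
  | zero => omega
  | succ k ih =>
    intro _ hk
    rcases Nat.eq_zero_or_pos k with rfl | hkpos
    · rw [tauChain_one]
      refine ⟨?_, ?_, ?_⟩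
      · have := sigma_app hmono (l - 1) (by omega) (l - 1) le_rfl
        rwa [show l - 1 + 1 = l from by omega] at this
      · intro r h1 h2
        have := sigma_app hmono (l - 1) (by omega) (r - 1) (by omega)
        rwa [show r - 1 + 1 = r from by omega] at this
      · intro z hz
        exact sigma_fix hmono (l - 1) (by omega) z
          (fun s hs => hz s (by omega))
    · obtain ⟨htop, hmid, hfix⟩ := ih hkpos (by omega)
      have hrec : tauChain i l (k + 1)
          = Equiv.swap (i (l - (k + 1))) (i (l - (k + 1) + 1)) * tauChain i l k := by
        have := tauChain_succ i l (k + 1) (by omega) (by omega)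
        rwa [show k + 1 - 1 = k from rfl] at this
      have he : l - (k + 1) + 1 = l - k := by omega
      refine ⟨?_, ?_, ?_⟩
      · rw [hrec, Equiv.Perm.mul_apply, htop, he]
        exact Equiv.swap_apply_right _ _
      · intro r h1 h2
        rw [hrec, Equiv.Perm.mul_apply, hmid r h1 (by omega)]
        exact Equiv.swap_apply_of_ne_of_ne
          (chain_ne hmono (by omega) (by omega) (by omega))
          (chain_ne hmono (by omega) (by omega) (by omega))
      · intro z hz
        rw [hrec, Equiv.Perm.mul_apply, hfix z hz]
        exact Equiv.swap_apply_of_ne_of_ne (hz _ (by omega)) (hz _ (by omega))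

end Actions

/-- `inv(τ_k) = inv(τ_{k-1}) + 1` for `2 ≤ k ≤ l`. -/
theorem invNum_tauChain_succ {n : ℕ} (l : ℕ) (hl : 2 ≤ l) (i : ℕ → Fin n)
    (hmono : ∀ r, r < l → i r < i (r + 1)) (a b : Fin n) (hab : a < b)
    (ha : i 0 = a) (hb : i l = b) (k : ℕ) (hk1 : 2 ≤ k) (hk2 : k ≤ l) :
    invNum (tauChain i l k) = invNum (tauChain i l (k - 1)) + 1 := by
  obtain ⟨htop, hmid, hfix⟩ := tau_facts hmono hl (k - 1) (by omega) (by omega)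
  set π := tauChain i l (k - 1) with hπ
  rw [tauChain_succ i l k hk1 hk2]
  have hx : π (i (l - k + 1)) = i (l - k) := by
    have := hmid (l - k + 1) (by omega) (by omega)
    rwa [show l - k + 1 - 1 = l - k from by omega] at this
  have hy : π (i l) = i (l - k + 1) := by
    have := htop
    rwa [show l - (k - 1) = l - k + 1 from by omega] at this
  have hPx : π⁻¹ (i (l - k)) = i (l - k + 1) := by
    rw [Equiv.Perm.inv_eq_iff_eq, hx]
  have hPy : π⁻¹ (i (l - k + 1)) = i l := by
    rw [Equiv.Perm.inv_eq_iff_eq, hy]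
  apply key π (i (l - k)) (i (l - k + 1))
  · exact chain_mono hmono (by omega) (by omega)
  · rw [hPx, hPy]
    exact chain_mono hmono (by omega) (by omega)
  · intro z h1 h2
    have hnz : ∀ s, s ≤ l → z ≠ i s := by
      intro s hs heq
      subst heq
      rcases Nat.lt_or_ge s (l - k + 1) with h | h
      · have hle : i s ≤ i (l - k) := by
          rcases Nat.eq_or_lt_of_le (by omega : s ≤ l - k) with h' | h'
          · exact h' ▸ le_rfl
          · exact le_of_lt (chain_mono hmono h' (by omega))
        exact absurd (lt_of_lt_of_le h1 hle) (lt_irrefl _)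
      · have hle : i (l - k + 1) ≤ i s := by
          rcases Nat.eq_or_lt_of_le h with h' | h'
          · exact h' ▸ le_rfl
          · exact le_of_lt (chain_mono hmono h' hs)
        exact absurd (lt_of_lt_of_le h2 hle) (lt_irrefl _)
    have hfz : π z = z := hfix z hnz
    have hiz : π⁻¹ z = z := by rw [Equiv.Perm.inv_eq_iff_eq, hfz]
    rw [hiz, hPx]
    exact h2
end

section
/- In the symmetric group S_n, for any σ, τ ∈ S_n the join σ ∨_R τ in the right weak order exists and its left-reflection set satisfies T_L(σ ∨_R τ) = (T_L(σ) ∪ T_L(τ))^{tc}, the transitive closure of T_L(σ) ∪ T_L(τ). -/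
open Equiv

/-- A set of transpositions is transitively closed if `(i j), (j k) ∈ J` with
`i < j < k` implies `(i k) ∈ J`. -/
def TransClosed {n : ℕ} (J : Set (Equiv.Perm (Fin n))) : Prop :=
  ∀ i j k : Fin n, i < j → j < k →
    Equiv.swap i j ∈ J → Equiv.swap j k ∈ J → Equiv.swap i k ∈ J

/-- The transitive closure: the smallest transitively closed set containing `J`. -/
def transClosure {n : ℕ} (J : Set (Equiv.Perm (Fin n))) : Set (Equiv.Perm (Fin n)) :=
  ⋂₀ {K | J ⊆ K ∧ TransClosed K}


section AuxJoin
open Finset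

theorem Equiv.Perm.apply_inv_self {α : Type*} (f : Perm α) (x : α) : f (f⁻¹ x) = x :=
  f.apply_symm_apply x

theorem Equiv.Perm.inv_apply_self {α : Type*} (f : Perm α) (x : α) : f⁻¹ (f x) = x :=
  f.symm_apply_apply x

lemma prod_formula {n : ℕ} (x y : Perm (Fin n)) :
    invNum x + invNum y = invNum (x * y) +
      2 * (Finset.univ.filter (fun p : Fin n × Fin n =>
        p.1 < p.2 ∧ y p.2 < y p.1 ∧ x (y p.1) < x (y p.2))).card := by
  classical
  set A : Finset (Fin n × Fin n) := Finset.univ.filter (fun p =>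
    p.1 < p.2 ∧ ((y p.1 < y p.2 ∧ x (y p.2) < x (y p.1)) ∨
      (y p.2 < y p.1 ∧ x (y p.1) < x (y p.2)))) with hAdef
  set B : Finset (Fin n × Fin n) := Finset.univ.filter (fun p =>
    p.1 < p.2 ∧ y p.2 < y p.1) with hBdef
  set G : Finset (Fin n × Fin n) := Finset.univ.filter (fun p =>
    p.1 < p.2 ∧ x (y p.2) < x (y p.1)) with hGdef
  set C : Finset (Fin n × Fin n) := Finset.univ.filter (fun p =>
    p.1 < p.2 ∧ y p.2 < y p.1 ∧ x (y p.1) < x (y p.2)) with hCdef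
  have hyne : ∀ p : Fin n × Fin n, p.1 < p.2 → y p.1 ≠ y p.2 := by
    intro p hp h
    exact absurd (y.injective h) (ne_of_lt hp)
  have hxyne : ∀ p : Fin n × Fin n, p.1 < p.2 → x (y p.1) ≠ x (y p.2) := by
    intro p hp h
    exact absurd (y.injective (x.injective h)) (ne_of_lt hp)
  -- card A = invNum x
  have hA : A.card = invNum x := by
    unfold invNum
    apply Finset.card_nbij'
      (i := fun p => if y p.1 < y p.2 then (y p.1, y p.2) else (y p.2, y p.1))
      (j := fun q => if y⁻¹ q.1 < y⁻¹ q.2 then (y⁻¹ q.1, y⁻¹ q.2) else (y⁻¹ q.2, y⁻¹ q.1))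
    · intro p hp
      simp only [hAdef, Finset.mem_coe, Finset.mem_filter, Finset.mem_univ, true_and] at hp ⊢
      obtain ⟨h12, hcase⟩ := hp
      rcases hcase with ⟨h1, h2⟩ | ⟨h1, h2⟩
      · rw [if_pos h1]; exact ⟨h1, h2⟩
      · rw [if_neg (asymm h1)]; exact ⟨h1, h2⟩
    · intro q hq
      simp only [hAdef, Finset.mem_coe, Finset.mem_filter, Finset.mem_univ, true_and] at hq ⊢
      obtain ⟨h12, hx⟩ := hq
      have hne : y⁻¹ q.1 ≠ y⁻¹ q.2 := fun h => ne_of_lt h12 (by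
        have := congrArg y h; simpa using this)
      rcases lt_or_gt_of_ne hne with h | h
      · rw [if_pos h]
        refine ⟨h, Or.inl ?_⟩
        simp only [Equiv.Perm.apply_inv_self]
        exact ⟨h12, hx⟩
      · rw [if_neg (asymm h)]
        refine ⟨h, Or.inr ?_⟩
        simp only [Equiv.Perm.apply_inv_self]
        exact ⟨h12, hx⟩
    · intro p hp
      simp only [hAdef, Finset.mem_coe, Finset.mem_filter, Finset.mem_univ, true_and] at hp ⊢
      obtain ⟨h12, hcase⟩ := hp
      rcases hcase with ⟨h1, _⟩ | ⟨h1, _⟩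
      · rw [if_pos h1]
        simp only [Equiv.Perm.inv_apply_self]
        rw [if_pos h12]
      · rw [if_neg (asymm h1)]
        simp only [Equiv.Perm.inv_apply_self]
        rw [if_neg (asymm h12)]
    · intro q hq
      simp only [Finset.mem_coe, Finset.mem_filter, Finset.mem_univ, true_and] at hq ⊢
      obtain ⟨h12, _⟩ := hq
      by_cases h : y⁻¹ q.1 < y⁻¹ q.2
      · rw [if_pos h]
        simp only [Equiv.Perm.apply_inv_self]
        rw [if_pos h12]
      · rw [if_neg h]
        simp only [Equiv.Perm.apply_inv_self]
        rw [if_neg (asymm h12)]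
  -- A ∪ B = G ∪ C and disjoint
  have hunion : A ∪ B = G ∪ C := by
    ext p
    simp only [hAdef, hBdef, hGdef, hCdef, Finset.mem_union, Finset.mem_filter,
      Finset.mem_univ, true_and]
    constructor
    · rintro (⟨h12, hc⟩ | ⟨h12, hc⟩)
      · rcases hc with ⟨h1, h2⟩ | ⟨h1, h2⟩
        · exact Or.inl ⟨h12, h2⟩
        · exact Or.inr ⟨h12, h1, h2⟩
      · rcases lt_or_gt_of_ne (hxyne p h12) with h | h
        · exact Or.inr ⟨h12, hc, h⟩
        · exact Or.inl ⟨h12, h⟩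
    · rintro (⟨h12, hc⟩ | ⟨h12, h1, h2⟩)
      · rcases lt_or_gt_of_ne (hyne p h12) with h | h
        · exact Or.inl ⟨h12, Or.inl ⟨h, hc⟩⟩
        · exact Or.inr ⟨h12, h⟩
      · exact Or.inr ⟨h12, h1⟩
  have hinter : A ∩ B = C := by
    ext p
    simp only [hAdef, hBdef, hCdef, Finset.mem_inter, Finset.mem_filter,
      Finset.mem_univ, true_and]
    constructor
    · rintro ⟨⟨h12, hc⟩, ⟨_, h1⟩⟩
      rcases hc with ⟨h, _⟩ | ⟨_, h2⟩
      · exact absurd h (asymm h1)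
      · exact ⟨h12, h1, h2⟩
    · rintro ⟨h12, h1, h2⟩
      exact ⟨⟨h12, Or.inr ⟨h1, h2⟩⟩, h12, h1⟩
  have hdisj : Disjoint G C := by
    rw [Finset.disjoint_left]
    intro p hp hq
    simp only [hGdef, hCdef, Finset.mem_filter, Finset.mem_univ, true_and] at hp hq
    exact absurd hp.2 (asymm hq.2.2)
  have hGcard : G.card = invNum (x * y) := by
    rfl
  have hBcard : B.card = invNum y := rfl
  have key := Finset.card_union_add_card_inter A B
  rw [hunion, hinter, Finset.card_union_of_disjoint hdisj] at key
  rw [← hA, ← hBcard, ← key, hGcard.symm]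
  ring

lemma wleR_iff_invSubset {n : ℕ} (u v : Perm (Fin n)) :
    wleR u v ↔ InvSet u⁻¹ ⊆ InvSet v⁻¹ := by
  classical
  have h := prod_formula u (u⁻¹ * v)
  rw [mul_inv_cancel_left] at h
  simp only [Perm.mul_apply, Perm.apply_inv_self] at h
  have hkey : wleR u v ↔ ∀ p : Fin n × Fin n,
      ¬(p.1 < p.2 ∧ u⁻¹ (v p.2) < u⁻¹ (v p.1) ∧ v p.1 < v p.2) := by
    unfold wleR
    constructor
    · intro he p hp
      have hc : (Finset.univ.filter (fun p : Fin n × Fin n =>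
          p.1 < p.2 ∧ u⁻¹ (v p.2) < u⁻¹ (v p.1) ∧ v p.1 < v p.2)).card = 0 := by omega
      rw [Finset.card_eq_zero, Finset.filter_eq_empty_iff] at hc
      exact hc (Finset.mem_univ p) hp
    · intro hall
      have hc : (Finset.univ.filter (fun p : Fin n × Fin n =>
          p.1 < p.2 ∧ u⁻¹ (v p.2) < u⁻¹ (v p.1) ∧ v p.1 < v p.2)) = ∅ := by
        rw [Finset.filter_eq_empty_iff]
        exact fun {p} _ => hall p
      rw [hc] at h
      simpa using h
  rw [hkey]
  constructor
  · intro hall q hq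
    obtain ⟨hab, hinv⟩ := hq
    refine ⟨hab, ?_⟩
    by_contra hcon
    have hne : v⁻¹ q.1 ≠ v⁻¹ q.2 := fun hh => ne_of_lt hab (by
      have := congrArg v hh; simpa using this)
    have hlt : v⁻¹ q.1 < v⁻¹ q.2 := lt_of_le_of_ne (not_lt.mp hcon) hne
    exact hall (v⁻¹ q.1, v⁻¹ q.2) (by
      simp only [Perm.apply_inv_self]
      exact ⟨hlt, hinv, hab⟩)
  · intro hsub p hp
    obtain ⟨h12, hinv, hv⟩ := hp
    have hmem : (v p.1, v p.2) ∈ InvSet u⁻¹ := ⟨hv, hinv⟩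
    have := hsub hmem
    obtain ⟨-, hlt⟩ := this
    simp only [Perm.inv_apply_self] at hlt
    exact absurd h12 (asymm hlt)

lemma swap_lt_iff {n : ℕ} {a b : Fin n} (hab : a < b) (q : Fin n × Fin n) :
    (q.1 < q.2 ∧ Equiv.swap a b q.2 < Equiv.swap a b q.1) ↔
      ((q.1 = a ∧ q.2 = b) ∨ (q.1 = a ∧ a < q.2 ∧ q.2 < b) ∨ (a < q.1 ∧ q.1 < b ∧ q.2 = b)) := by
  obtain ⟨u, v⟩ := q
  simp only
  constructor
  · rintro ⟨h12, hlt⟩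
    by_cases h1 : u = a
    · subst h1
      by_cases h2 : v = b
      · exact Or.inl ⟨rfl, h2⟩
      · have hva : v ≠ u := (ne_of_gt h12)
        rw [Equiv.swap_apply_left, Equiv.swap_apply_of_ne_of_ne hva h2] at hlt
        exact Or.inr (Or.inl ⟨rfl, h12, hlt⟩)
    · by_cases h1b : u = b
      · subst h1b
        exfalso
        have hva : v ≠ a := ne_of_gt (lt_trans hab h12)
        have hvb : v ≠ u := ne_of_gt h12
        rw [Equiv.swap_apply_right, Equiv.swap_apply_of_ne_of_ne hva hvb] at hlt
        exact asymm hlt (lt_trans hab h12)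
      · rw [Equiv.swap_apply_of_ne_of_ne h1 h1b] at hlt
        by_cases h2a : v = a
        · subst h2a
          exfalso
          rw [Equiv.swap_apply_left] at hlt
          exact asymm h12 (lt_trans hab hlt)
        · by_cases h2b : v = b
          · subst h2b
            rw [Equiv.swap_apply_right] at hlt
            exact Or.inr (Or.inr ⟨hlt, h12, rfl⟩)
          · rw [Equiv.swap_apply_of_ne_of_ne h2a h2b] at hlt
            exact absurd h12 (asymm hlt)
  · rintro (⟨h1, h2⟩ | ⟨h1, h2, h3⟩ | ⟨h1, h2, h3⟩)
    · subst h1; subst h2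
      rw [Equiv.swap_apply_left, Equiv.swap_apply_right]
      exact ⟨hab, hab⟩
    · subst h1
      have hva : v ≠ u := ne_of_gt h2
      have hvb : v ≠ b := ne_of_lt h3
      rw [Equiv.swap_apply_left, Equiv.swap_apply_of_ne_of_ne hva hvb]
      exact ⟨h2, h3⟩
    · subst h3
      have hua : u ≠ a := ne_of_gt h1
      have hub : u ≠ v := ne_of_lt h2
      rw [Equiv.swap_apply_right, Equiv.swap_apply_of_ne_of_ne hua hub]
      exact ⟨h2, h1⟩

lemma invNum_swap_mul_lt_iff {n : ℕ} {a b : Fin n} (hab : a < b) (σ : Perm (Fin n)) :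
    invNum (Equiv.swap a b * σ) < invNum σ ↔ σ⁻¹ b < σ⁻¹ a := by
  classical
  set t := Equiv.swap a b with ht
  have h := prod_formula t σ
  set C : Finset (Fin n × Fin n) := Finset.univ.filter (fun p : Fin n × Fin n =>
    p.1 < p.2 ∧ σ p.2 < σ p.1 ∧ t (σ p.1) < t (σ p.2)) with hCdef
  set D : Finset (Fin n × Fin n) := Finset.univ.filter (fun q : Fin n × Fin n =>
    q.1 < q.2 ∧ t q.2 < t q.1 ∧ σ⁻¹ q.2 < σ⁻¹ q.1) with hDdef
  set T : Finset (Fin n × Fin n) := Finset.univ.filter (fun q : Fin n × Fin n =>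
    q.1 < q.2 ∧ t q.2 < t q.1) with hTdef
  have hTcard : invNum t = T.card := rfl
  have hCD : C.card = D.card := by
    apply Finset.card_nbij' (i := fun p => (σ p.2, σ p.1)) (j := fun q => (σ⁻¹ q.2, σ⁻¹ q.1))
    · intro p hp
      simp only [hCdef, hDdef, Finset.mem_coe, Finset.mem_filter, Finset.mem_univ, true_and] at hp ⊢
      obtain ⟨h1, h2, h3⟩ := hp
      refine ⟨h2, h3, ?_⟩
      simp only [Perm.inv_apply_self]
      exact h1
    · intro q hq
      simp only [hCdef, hDdef, Finset.mem_coe, Finset.mem_filter, Finset.mem_univ, true_and] at hq ⊢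
      obtain ⟨h1, h2, h3⟩ := hq
      refine ⟨h3, ?_, ?_⟩ <;> simp only [Perm.apply_inv_self]
      · exact h1
      · exact h2
    · intro p hp; simp
    · intro q hq; simp
  have hDT : D ⊆ T := by
    intro q hq
    simp only [hDdef, hTdef, Finset.mem_filter, Finset.mem_univ, true_and] at hq ⊢
    exact ⟨hq.1, hq.2.1⟩
  have hsplit : (T \ D).card + D.card = T.card := Finset.card_sdiff_add_card_eq_card hDT
  have memT : ∀ q : Fin n × Fin n, q ∈ T ↔
      ((q.1 = a ∧ q.2 = b) ∨ (q.1 = a ∧ a < q.2 ∧ q.2 < b) ∨ (a < q.1 ∧ q.1 < b ∧ q.2 = b)) := by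
    intro q
    rw [hTdef, Finset.mem_filter]
    simp only [Finset.mem_univ, true_and]
    exact swap_lt_iff hab q
  have memD : ∀ q : Fin n × Fin n, q ∈ D ↔ q ∈ T ∧ σ⁻¹ q.2 < σ⁻¹ q.1 := by
    intro q
    rw [hDdef, hTdef, Finset.mem_filter, Finset.mem_filter]
    simp only [Finset.mem_univ, true_and]
    tauto
  set f : Fin n × Fin n → Fin n × Fin n := fun q => if q.1 = a then (q.2, b) else (a, q.1) with hf
  have hsnd : ∀ q : Fin n × Fin n, q ∈ T → a < q.2 := by
    intro q hq
    rcases (memT q).mp hq with ⟨_, h⟩ | ⟨_, h, _⟩ | ⟨_, _, h⟩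
    · rw [h]; exact hab
    · exact h
    · rw [h]; exact hab
  have hinjT : Set.InjOn f ↑T := by
    intro q hq q' hq' heq
    rw [Finset.mem_coe] at hq hq'
    simp only [hf] at heq
    split_ifs at heq with h1 h2 h2
    · have e := (Prod.mk.injEq _ _ _ _).mp heq
      exact Prod.ext (h1.trans h2.symm) e.1
    · have e := (Prod.mk.injEq _ _ _ _).mp heq
      exact absurd e.1 (ne_of_gt (hsnd q hq))
    · have e := (Prod.mk.injEq _ _ _ _).mp heq
      exact absurd e.1.symm (ne_of_gt (hsnd q' hq'))
    · have e := (Prod.mk.injEq _ _ _ _).mp heq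
      have e2 : q.2 = q'.2 := by
        rcases (memT q).mp hq with ⟨hh, _⟩ | ⟨hh, _, _⟩ | ⟨_, _, hh⟩
        · exact absurd hh h1
        · exact absurd hh h1
        · rcases (memT q').mp hq' with ⟨hh', _⟩ | ⟨hh', _, _⟩ | ⟨_, _, hh'⟩
          · exact absurd hh' h2
          · exact absurd hh' h2
          · rw [hh, hh']
      exact Prod.ext e.2 e2
  rcases lt_or_ge (σ⁻¹ b) (σ⁻¹ a) with hba | hba'
  · have habD : (a, b) ∈ D := by
      rw [memD, memT]
      exact ⟨Or.inl ⟨rfl, rfl⟩, hba⟩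
    have hmaps : ∀ q ∈ T \ D, f q ∈ D.erase (a, b) := by
      intro q hq
      rw [Finset.mem_sdiff] at hq
      obtain ⟨hqT, hqD⟩ := hq
      rw [memD, not_and] at hqD
      have hnot := hqD hqT
      rcases (memT q).mp hqT with ⟨h1, h2⟩ | ⟨h1, h2, h3⟩ | ⟨h1, h2, h3⟩
      · exfalso; apply hnot; rw [h1, h2]; exact hba
      · have hge : σ⁻¹ a ≤ σ⁻¹ q.2 := by rw [← h1]; exact le_of_not_gt hnot
        have hfq : f q = (q.2, b) := by simp only [hf, if_pos h1]
        rw [hfq, Finset.mem_erase]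
        constructor
        · intro hc
          have := congrArg Prod.fst hc
          exact absurd this.symm (ne_of_lt h2)
        · rw [memD, memT]
          exact ⟨Or.inr (Or.inr ⟨h2, h3, rfl⟩), lt_of_lt_of_le hba hge⟩
      · have hge : σ⁻¹ q.1 ≤ σ⁻¹ b := by
          rw [← h3]; exact le_of_not_gt hnot
        have hne : q.1 ≠ a := ne_of_gt h1
        have hfq : f q = (a, q.1) := by simp only [hf, if_neg hne]
        rw [hfq, Finset.mem_erase]
        constructor
        · intro hc
          have := congrArg Prod.snd hc
          exact absurd this (ne_of_lt h2)
        · rw [memD, memT]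
          exact ⟨Or.inr (Or.inl ⟨rfl, h1, h2⟩), lt_of_le_of_lt hge hba⟩
    have hcard1 : (T \ D).card ≤ (D.erase (a, b)).card := by
      apply Finset.card_le_card_of_injOn f hmaps
      exact hinjT.mono (by intro q hq; exact (Finset.mem_sdiff.mp hq).1)
    rw [Finset.card_erase_of_mem habD] at hcard1
    have hDpos : 1 ≤ D.card := Finset.card_pos.mpr ⟨(a, b), habD⟩
    constructor
    · intro _; exact hba
    · intro _; omega
  · have hba2 : σ⁻¹ a < σ⁻¹ b := by
      rcases lt_or_eq_of_le hba' with h' | h'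
      · exact h'
      · exfalso
        have : a = b := by
          have := congrArg σ h'
          simpa using this
        exact absurd this (ne_of_lt hab)
    have habTD : (a, b) ∈ T \ D := by
      rw [Finset.mem_sdiff, memT, memD]
      refine ⟨Or.inl ⟨rfl, rfl⟩, ?_⟩
      rw [not_and]
      intro _
      exact asymm hba2
    have hmaps : ∀ q ∈ D, f q ∈ (T \ D).erase (a, b) := by
      intro q hq
      have hqT := hDT hq
      rw [memD] at hq
      obtain ⟨_, hlt⟩ := hq
      rcases (memT q).mp hqT with ⟨h1, h2⟩ | ⟨h1, h2, h3⟩ | ⟨h1, h2, h3⟩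
      · exfalso; rw [h1, h2] at hlt; exact asymm hlt hba2
      · have hlt2 : σ⁻¹ q.2 < σ⁻¹ b := by
          rw [h1] at hlt; exact lt_trans hlt hba2
        have hfq : f q = (q.2, b) := by simp only [hf, if_pos h1]
        rw [hfq, Finset.mem_erase]
        constructor
        · intro hc
          have := congrArg Prod.fst hc
          exact absurd this.symm (ne_of_lt h2)
        · rw [Finset.mem_sdiff, memT, memD]
          refine ⟨Or.inr (Or.inr ⟨h2, h3, rfl⟩), ?_⟩
          rw [not_and]
          intro _
          exact asymm hlt2
      · have hlt2 : σ⁻¹ a < σ⁻¹ q.1 := by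
          rw [h3] at hlt; exact lt_trans hba2 hlt
        have hne : q.1 ≠ a := ne_of_gt h1
        have hfq : f q = (a, q.1) := by simp only [hf, if_neg hne]
        rw [hfq, Finset.mem_erase]
        constructor
        · intro hc
          have := congrArg Prod.snd hc
          exact absurd this (ne_of_lt h2)
        · rw [Finset.mem_sdiff, memT, memD]
          refine ⟨Or.inr (Or.inl ⟨rfl, h1, h2⟩), ?_⟩
          rw [not_and]
          intro _
          exact asymm hlt2
    have hcard1 : D.card ≤ ((T \ D).erase (a, b)).card := by
      apply Finset.card_le_card_of_injOn f hmaps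
      exact hinjT.mono (by intro q hq; exact hDT hq)
    rw [Finset.card_erase_of_mem habTD] at hcard1
    have hpos : 1 ≤ (T \ D).card := Finset.card_pos.mpr ⟨(a, b), habTD⟩
    constructor
    · intro hcon; omega
    · intro hcon; exact absurd hcon (asymm hba2)

lemma exists_perm_of_closed {n : ℕ} (F : Fin n × Fin n → Prop)
    (hlt : ∀ p, F p → p.1 < p.2)
    (hcl : ∀ i j k : Fin n, F (i, j) → F (j, k) → F (i, k))
    (hcocl : ∀ i j k : Fin n, i < j → j < k → F (i, k) → F (i, j) ∨ F (j, k)) :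
    ∃ w : Perm (Fin n), ∀ p : Fin n × Fin n, p ∈ InvSet w⁻¹ ↔ F p := by
  classical
  set lt' : Fin n → Fin n → Prop :=
    fun i j => (i < j ∧ ¬F (i, j)) ∨ (j < i ∧ F (j, i)) with hlt'
  have htrans : ∀ i j k, lt' i j → lt' j k → lt' i k := by
    intro i j k hij hjk
    rcases hij with ⟨h1, h2⟩ | ⟨h1, h2⟩ <;> rcases hjk with ⟨h3, h4⟩ | ⟨h3, h4⟩
    · -- i < j < k, ¬F(i,j), ¬F(j,k)
      left
      refine ⟨lt_trans h1 h3, fun hF => ?_⟩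
      rcases hcocl i j k h1 h3 hF with h | h
      · exact h2 h
      · exact h4 h
    · -- i < j, k < j, ¬F(i,j), F(k,j)
      rcases lt_trichotomy i k with hik | hik | hik
      · left
        refine ⟨hik, fun hF => h2 (hcl i k j hF h4)⟩
      · exfalso; rw [hik] at h2; exact h2 h4
      · right
        refine ⟨hik, ?_⟩
        rcases hcocl k i j hik h1 h4 with h | h
        · exact h
        · exact absurd h h2
    · -- j < i, j < k, F(j,i), ¬F(j,k)
      rcases lt_trichotomy i k with hik | hik | hik
      · left
        refine ⟨hik, fun hF => h4 (hcl j i k h2 hF)⟩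
      · exfalso; rw [hik] at h2; exact h4 h2
      · right
        refine ⟨hik, ?_⟩
        rcases hcocl j k i h3 hik h2 with h | h
        · exact absurd h h4
        · exact h
    · -- j < i, k < j, F(j,i), F(k,j)
      right
      exact ⟨lt_trans h3 h1, hcl k j i h4 h2⟩
  have hirr : ∀ i, ¬lt' i i := by
    rintro i (⟨h, _⟩ | ⟨h, _⟩) <;> exact lt_irrefl i h
  have htot : ∀ i j, i ≠ j → lt' i j ∨ lt' j i := by
    intro i j hne
    rcases lt_or_gt_of_ne hne with h | h
    · by_cases hF : F (i, j)
      · exact Or.inr (Or.inr ⟨h, hF⟩)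
      · exact Or.inl (Or.inl ⟨h, hF⟩)
    · by_cases hF : F (j, i)
      · exact Or.inl (Or.inr ⟨h, hF⟩)
      · exact Or.inr (Or.inl ⟨h, hF⟩)
  set rk : Fin n → ℕ := fun i => (Finset.univ.filter (fun k => lt' k i)).card with hrk
  have hmono : ∀ i j, lt' i j → rk i < rk j := by
    intro i j hij
    apply Finset.card_lt_card
    rw [Finset.ssubset_iff_of_subset]
    · exact ⟨i, by simp only [Finset.mem_filter, Finset.mem_univ, true_and]; exact ⟨hij, hirr i⟩⟩
    · intro k hk
      simp only [Finset.mem_filter, Finset.mem_univ, true_and] at hk ⊢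
      exact htrans k i j hk hij
  have hrklt : ∀ i, rk i < n := by
    intro i
    have h1 : (Finset.univ.filter (fun k => lt' k i)) ⊆ Finset.univ.erase i := by
      intro k hk
      simp only [Finset.mem_filter, Finset.mem_univ, true_and] at hk
      rw [Finset.mem_erase]
      refine ⟨fun hc => ?_, Finset.mem_univ k⟩
      rw [hc] at hk; exact hirr i hk
    calc rk i ≤ (Finset.univ.erase i).card := Finset.card_le_card h1
    _ < Finset.univ.card := Finset.card_erase_lt_of_mem (Finset.mem_univ i)
    _ = n := by simp
  set u : Fin n → Fin n := fun i => ⟨rk i, hrklt i⟩ with hu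
  have huinj : Function.Injective u := by
    intro i j hij
    by_contra hne
    have : rk i = rk j := by
      have := congrArg Fin.val hij
      exact this
    rcases htot i j hne with h | h
    · exact absurd this (ne_of_lt (hmono i j h))
    · exact absurd this.symm (ne_of_lt (hmono j i h))
  have hbij : Function.Bijective u := Finite.injective_iff_bijective.mp huinj
  set w' : Perm (Fin n) := Equiv.ofBijective u hbij with hw'
  have hw'app : ∀ i, w' i = u i := fun i => rfl
  have hltiff : ∀ i j, w' i < w' j ↔ lt' i j := by
    intro i j
    constructor
    · intro hlt
      rcases eq_or_ne i j with h | h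
      · rw [h] at hlt; exact absurd hlt (lt_irrefl _)
      · rcases htot i j h with h' | h'
        · exact h'
        · exact absurd hlt (asymm (hmono j i h'))
    · intro h
      exact hmono i j h
  refine ⟨w'⁻¹, fun p => ?_⟩
  have hinv : (w'⁻¹)⁻¹ = w' := inv_inv w'
  rw [InvSet, Set.mem_setOf_eq, hinv]
  constructor
  · rintro ⟨h12, hlt2⟩
    rcases (hltiff p.2 p.1).mp hlt2 with ⟨h, _⟩ | ⟨h, hF⟩
    · exact absurd h12 (asymm h)
    · exact hF
  · intro hF
    have h12 := hlt p hF
    refine ⟨h12, (hltiff p.2 p.1).mpr ?_⟩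
    right
    exact ⟨h12, hF⟩

lemma invSet_closed {n : ℕ} (π : Perm (Fin n)) (i j k : Fin n) :
    (i, j) ∈ InvSet π → (j, k) ∈ InvSet π → (i, k) ∈ InvSet π := by
  rintro ⟨h1, h2⟩ ⟨h3, h4⟩
  exact ⟨lt_trans h1 h3, lt_trans h4 h2⟩

lemma invSet_cocl {n : ℕ} (π : Perm (Fin n)) (i j k : Fin n) (hij : i < j) (hjk : j < k) :
    (i, k) ∈ InvSet π → (i, j) ∈ InvSet π ∨ (j, k) ∈ InvSet π := by
  rintro ⟨h1, h2⟩
  rcases lt_or_gt_of_ne (fun h : π j = π i => ne_of_lt hij (π.injective h).symm) with h | h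
  · exact Or.inl ⟨hij, h⟩
  · exact Or.inr ⟨hjk, lt_trans h2 h⟩

lemma mem_TL_iff {n : ℕ} (π : Perm (Fin n)) (t : Perm (Fin n)) :
    t ∈ TL π ↔ ∃ a b : Fin n, a < b ∧ t = Equiv.swap a b ∧ (a, b) ∈ InvSet π⁻¹ := by
  constructor
  · rintro ⟨⟨x, y, hxy, hxyt⟩, hlen⟩
    rcases lt_or_gt_of_ne hxy with h | h
    · refine ⟨x, y, h, hxyt, h, ?_⟩
      rw [hxyt] at hlen
      exact (invNum_swap_mul_lt_iff h π).mp hlen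
    · refine ⟨y, x, h, by rw [hxyt, Equiv.swap_comm], h, ?_⟩
      rw [hxyt, Equiv.swap_comm] at hlen
      exact (invNum_swap_mul_lt_iff h π).mp hlen
  · rintro ⟨a, b, hab, ht, h1, h2⟩
    refine ⟨⟨a, b, ne_of_lt hab, ht⟩, ?_⟩
    rw [ht]
    exact (invNum_swap_mul_lt_iff hab π).mpr h2


end AuxJoin

/-- the join `σ ∨_R τ` in the right weak order exists, and
`T_L(σ ∨_R τ) = (T_L(σ) ∪ T_L(τ))^{tc}`. -/
theorem TL_join_eq_transClosure {n : ℕ} (σ τ : Equiv.Perm (Fin n)) :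
    ∃ w : Equiv.Perm (Fin n),
      (wleR σ w ∧ wleR τ w ∧ ∀ z, wleR σ z → wleR τ z → wleR w z) ∧
      TL w = transClosure (TL σ ∪ TL τ) := by
  classical
  set r : Fin n → Fin n → Prop :=
    fun i j => (i, j) ∈ InvSet σ⁻¹ ∨ (i, j) ∈ InvSet τ⁻¹ with hr
  have hrlt : ∀ i j, r i j → i < j := by
    rintro i j (⟨h, _⟩ | ⟨h, _⟩) <;> exact h
  have htglt : ∀ i j, Relation.TransGen r i j → i < j := by
    intro i j h
    induction h with
    | single h' => exact hrlt _ _ h'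
    | tail _ h' ih => exact lt_trans ih (hrlt _ _ h')
  have hrcocl : ∀ i j k : Fin n, i < j → j < k → r i k → r i j ∨ r j k := by
    intro i j k hij hjk hik
    rcases hik with h | h
    · rcases invSet_cocl σ⁻¹ i j k hij hjk h with h' | h'
      · exact Or.inl (Or.inl h')
      · exact Or.inr (Or.inl h')
    · rcases invSet_cocl τ⁻¹ i j k hij hjk h with h' | h'
      · exact Or.inl (Or.inr h')
      · exact Or.inr (Or.inr h')
  have htgcocl : ∀ i k : Fin n, Relation.TransGen r i k →
      ∀ j, i < j → j < k → Relation.TransGen r i j ∨ Relation.TransGen r j k := by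
    intro i k h
    induction h with
    | single h' =>
      intro j hij hjk
      rcases hrcocl _ _ _ hij hjk h' with h'' | h''
      · exact Or.inl (Relation.TransGen.single h'')
      · exact Or.inr (Relation.TransGen.single h'')
    | @tail c k h' hck ih =>
      intro j hij hjk
      rcases lt_trichotomy j c with hjc | hjc | hjc
      · rcases ih j hij hjc with h'' | h''
        · exact Or.inl h''
        · exact Or.inr (h''.tail hck)
      · rw [hjc]
        exact Or.inl h'
      · rcases hrcocl c j k hjc hjk hck with h'' | h''
        · exact Or.inl (h'.tail h'')
        · exact Or.inr (Relation.TransGen.single h'')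
  obtain ⟨w, hw⟩ := exists_perm_of_closed (fun p => Relation.TransGen r p.1 p.2)
    (fun p hp => htglt _ _ hp)
    (fun i j k h1 h2 => h1.trans h2)
    (fun i j k hij hjk h => htgcocl i k h j hij hjk)
  have hsub : ∀ π : Perm (Fin n), (∀ i j, r i j → (i, j) ∈ InvSet π⁻¹) →
      InvSet w⁻¹ ⊆ InvSet π⁻¹ := by
    intro π hbase p hp
    have htg := (hw p).mp hp
    have : ∀ i j, Relation.TransGen r i j → (i, j) ∈ InvSet π⁻¹ := by
      intro i j h
      induction h with
      | single h' => exact hbase _ _ h'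
      | @tail c k h' hck ih => exact invSet_closed π⁻¹ i c k ih (hbase _ _ hck)
    have := this p.1 p.2 htg
    exact this
  refine ⟨w, ⟨?_, ?_, ?_⟩, ?_⟩
  · rw [wleR_iff_invSubset]
    intro p hp
    rw [hw]
    exact Relation.TransGen.single (Or.inl (by simpa using hp))
  · rw [wleR_iff_invSubset]
    intro p hp
    rw [hw]
    exact Relation.TransGen.single (Or.inr (by simpa using hp))
  · intro z hσz hτz
    rw [wleR_iff_invSubset] at hσz hτz ⊢
    apply hsub
    rintro i j (h | h)
    · exact hσz h
    · exact hτz h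
  · apply Set.Subset.antisymm
    · -- TL w ⊆ transClosure
      intro t ht
      rw [mem_TL_iff] at ht
      obtain ⟨a, b, hab, ht', hmem⟩ := ht
      have htg : Relation.TransGen r a b := (hw (a, b)).mp hmem
      intro K hK
      obtain ⟨hJK, hKcl⟩ := hK
      rw [ht']
      clear ht' hmem hab
      induction htg with
      | single h' =>
        apply hJK
        rcases h' with h'' | h''
        · left
          rw [mem_TL_iff]
          exact ⟨a, _, h''.1, rfl, h''⟩
        · right
          rw [mem_TL_iff]
          exact ⟨a, _, h''.1, rfl, h''⟩
      | @tail c k h' hck ih =>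
        have hswK : Equiv.swap c k ∈ K := by
          apply hJK
          rcases hck with h'' | h''
          · left
            rw [mem_TL_iff]
            exact ⟨c, k, h''.1, rfl, h''⟩
          · right
            rw [mem_TL_iff]
            exact ⟨c, k, h''.1, rfl, h''⟩
        exact hKcl a c k (htglt _ _ h') (hrlt _ _ hck) ih hswK
    · -- transClosure ⊆ TL w
      apply Set.sInter_subset_of_mem
      constructor
      · rintro t (ht | ht) <;> rw [mem_TL_iff] at ht ⊢ <;>
          obtain ⟨a, b, hab, ht', hmem⟩ := ht
        · exact ⟨a, b, hab, ht', (hw (a, b)).mpr (Relation.TransGen.single (Or.inl hmem))⟩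
        · exact ⟨a, b, hab, ht', (hw (a, b)).mpr (Relation.TransGen.single (Or.inr hmem))⟩
      · intro i j k hij hjk h1 h2
        have h1' : (i, j) ∈ InvSet w⁻¹ :=
          ⟨hij, (invNum_swap_mul_lt_iff hij w).mp h1.2⟩
        have h2' : (j, k) ∈ InvSet w⁻¹ :=
          ⟨hjk, (invNum_swap_mul_lt_iff hjk w).mp h2.2⟩
        have h3 : (i, k) ∈ InvSet w⁻¹ :=
          (hw (i, k)).mpr (((hw (i, j)).mp h1').trans ((hw (j, k)).mp h2'))
        rw [mem_TL_iff]
        exact ⟨i, k, lt_trans hij hjk, rfl, h3⟩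
end

section
/- Let σ, τ ∈ S_n and suppose a transposition t = (a b) can be written as t = t_m ··· t_1 where each t_r ∈ T_L(σ) ∪ T_L(τ) and ℓ(t_1) < ℓ(t_2 t_1) < ... < ℓ(t_m ··· t_1). Then ℓ(t·(σ ∨_R τ)) < ℓ(σ ∨_R τ), i.e., t ∈ T_L(σ ∨_R τ). -/
open Equiv

/-- The partial product `t_r t_{r-1} ⋯ t_1`. -/
def partialProd {n : ℕ} (ts : ℕ → Equiv.Perm (Fin n)) (r : ℕ) : Equiv.Perm (Fin n) :=
  ((List.range r).map (fun m => ts (r - m))).prod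

/-- `t` is reachable by a `(σ,τ)`-Bruhat path from the identity: `t = t_m ⋯ t_1`
with all `t_r ∈ T_L(σ) ∪ T_L(τ)` and strictly increasing partial lengths. -/
def BruhatReachable {n : ℕ} (σ τ t : Equiv.Perm (Fin n)) : Prop :=
  ∃ m : ℕ, 1 ≤ m ∧ ∃ ts : ℕ → Equiv.Perm (Fin n),
    (∀ r, 1 ≤ r → r ≤ m → ts r ∈ TL σ ∪ TL τ) ∧
    t = partialProd ts m ∧
    ∀ r, 1 ≤ r → r < m → invNum (partialProd ts r) < invNum (partialProd ts (r + 1))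

def invF {n : ℕ} (π : Equiv.Perm (Fin n)) : Finset (Fin n × Fin n) :=
  Finset.univ.filter (fun p : Fin n × Fin n => p.1 < p.2 ∧ π p.2 < π p.1)

lemma invNum_def {n : ℕ} (π : Equiv.Perm (Fin n)) : invNum π = (invF π).card := rfl

lemma mem_invF {n : ℕ} {π : Equiv.Perm (Fin n)} {p : Fin n × Fin n} :
    p ∈ invF π ↔ p.1 < p.2 ∧ π p.2 < π p.1 := by
  simp [invF]

lemma invNum_lt_swap_mul {n : ℕ} {u : Equiv.Perm (Fin n)} {c d : Fin n} (hcd : c < d)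
    (h : u⁻¹ c < u⁻¹ d) : invNum u < invNum (Equiv.swap c d * u) := by
  classical
  set p := u⁻¹ c with hp
  set q := u⁻¹ d with hq
  have hup : u p = c := u.apply_symm_apply c
  have huq : u q = d := u.apply_symm_apply d
  have hpq : p < q := h
  set s := Equiv.swap p q with hs
  have hsw : Equiv.swap c d * u = u * s := Equiv.swap_mul_eq_mul_swap u c d
  have hmapsto : ∀ κ ∈ insert (p, q) (invF u),
      (if s κ.2 < s κ.1 then κ else (s κ.1, s κ.2)) ∈ invF (u * s) := by
    intro κ hκ
    rcases Finset.mem_insert.mp hκ with rfl | hmem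
    · have hcond : s (p, q).2 < s (p, q).1 := by
        show s q < s p
        rw [show s q = p from Equiv.swap_apply_right p q,
            show s p = q from Equiv.swap_apply_left p q]
        exact hpq
      rw [if_pos hcond]
      refine mem_invF.mpr ⟨hpq, ?_⟩
      show u (s q) < u (s p)
      rw [show s q = p from Equiv.swap_apply_right p q,
          show s p = q from Equiv.swap_apply_left p q, hup, huq]
      exact hcd
    · obtain ⟨hij, hval⟩ := mem_invF.mp hmem
      obtain ⟨i, j⟩ := κ
      simp only at hij hval ⊢
      by_cases hb : s j < s i
      · rw [if_pos hb]
        refine mem_invF.mpr ⟨hij, ?_⟩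
        show u (s j) < u (s i)
        by_cases hip : i = p
        · rw [hip] at hval hij ⊢
          have hjq : j ≠ q := by
            rintro rfl
            rw [hup, huq] at hval
            exact absurd hval (not_lt.mpr hcd.le)
          have hjp : j ≠ p := ne_of_gt hij
          rw [show s j = j from Equiv.swap_apply_of_ne_of_ne hjp hjq,
              show s p = q from Equiv.swap_apply_left p q, huq]
          rw [hup] at hval
          exact lt_trans hval hcd
        · by_cases hiq : i = q
          · exfalso
            rw [hiq] at hij hb
            have hjp : j ≠ p := fun e => absurd (lt_trans hpq hij) (by rw [e]; exact lt_irrefl p)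
            have hjq : j ≠ q := ne_of_gt hij
            rw [show s j = j from Equiv.swap_apply_of_ne_of_ne hjp hjq,
                show s q = p from Equiv.swap_apply_right p q] at hb
            exact absurd (lt_trans hpq hij) (not_lt.mpr hb.le)
          · have hsi : s i = i := Equiv.swap_apply_of_ne_of_ne hip hiq
            by_cases hjp : j = p
            · exfalso
              rw [hjp] at hij hb
              rw [show s p = q from Equiv.swap_apply_left p q, hsi] at hb
              exact absurd (lt_trans hij hpq) (not_lt.mpr hb.le)
            · by_cases hjq : j = q
              · rw [hjq] at hval ⊢
                rw [show s q = p from Equiv.swap_apply_right p q, hsi, hup]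
                rw [huq] at hval
                exact lt_trans hcd hval
              · exfalso
                rw [show s j = j from Equiv.swap_apply_of_ne_of_ne hjp hjq, hsi] at hb
                exact absurd hij (not_lt.mpr hb.le)
      · have hss : s i < s j :=
          lt_of_le_of_ne (not_lt.mp hb) (fun e => (ne_of_lt hij) (s.injective e))
        rw [if_neg hb]
        refine mem_invF.mpr ⟨hss, ?_⟩
        show u (s (s j)) < u (s (s i))
        rw [show s (s j) = j from Equiv.swap_apply_self p q j,
            show s (s i) = i from Equiv.swap_apply_self p q i]
        exact hval
  have hinj : Set.InjOn (fun κ : Fin n × Fin n => if s κ.2 < s κ.1 then κ else (s κ.1, s κ.2))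
      (insert (p, q) (invF u) : Finset (Fin n × Fin n)) := by
    have hlt : ∀ κ ∈ insert (p, q) (invF u), κ.1 < κ.2 := by
      intro κ hκ
      rcases Finset.mem_insert.mp hκ with rfl | hmem
      · exact hpq
      · exact (mem_invF.mp hmem).1
    rintro ⟨i1, j1⟩ h₁ ⟨i2, j2⟩ h₂ he
    simp only at he
    by_cases b₁ : s j1 < s i1 <;> by_cases b₂ : s j2 < s i2
    · rw [if_pos b₁, if_pos b₂] at he; exact he
    · exfalso
      rw [if_pos b₁, if_neg b₂] at he
      obtain ⟨e1, e2⟩ := Prod.mk.injEq .. ▸ he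
      rw [e1, e2] at b₁
      rw [show s (s j2) = j2 from Equiv.swap_apply_self p q j2,
          show s (s i2) = i2 from Equiv.swap_apply_self p q i2] at b₁
      exact absurd (hlt _ h₂) (not_lt.mpr b₁.le)
    · exfalso
      rw [if_neg b₁, if_pos b₂] at he
      obtain ⟨e1, e2⟩ := Prod.mk.injEq .. ▸ he
      rw [← e1, ← e2] at b₂
      rw [show s (s j1) = j1 from Equiv.swap_apply_self p q j1,
          show s (s i1) = i1 from Equiv.swap_apply_self p q i1] at b₂
      exact absurd (hlt _ h₁) (not_lt.mpr b₂.le)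
    · rw [if_neg b₁, if_neg b₂] at he
      obtain ⟨e1, e2⟩ := Prod.mk.injEq .. ▸ he
      exact Prod.ext (s.injective e1) (s.injective e2)
  have hnotmem : (p, q) ∉ invF u := by
    intro hmem
    have hx := (mem_invF.mp hmem).2
    simp only at hx
    rw [hup, huq] at hx
    exact absurd hx (not_lt.mpr hcd.le)
  have hcard : (insert (p, q) (invF u)).card = invNum u + 1 := by
    rw [Finset.card_insert_of_notMem hnotmem, invNum_def]
  have hle : (insert (p, q) (invF u)).card ≤ invNum (u * s) := by
    rw [invNum_def]
    exact Finset.card_le_card_of_injOn _ hmapsto hinj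
  rw [hsw]
  omega

lemma swap_mul_invNum_lt {n : ℕ} {u : Equiv.Perm (Fin n)} {c d : Fin n} (hcd : c < d)
    (h : u⁻¹ d < u⁻¹ c) : invNum (Equiv.swap c d * u) < invNum u := by
  have e1 : (Equiv.swap c d * u)⁻¹ c = u⁻¹ d := by
    rw [mul_inv_rev, Equiv.Perm.mul_apply, Equiv.swap_inv, Equiv.swap_apply_left]
  have e2 : (Equiv.swap c d * u)⁻¹ d = u⁻¹ c := by
    rw [mul_inv_rev, Equiv.Perm.mul_apply, Equiv.swap_inv, Equiv.swap_apply_right]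
  have h2 : (Equiv.swap c d * u)⁻¹ c < (Equiv.swap c d * u)⁻¹ d := by
    rw [e1, e2]; exact h
  have := invNum_lt_swap_mul hcd h2
  rwa [← mul_assoc, Equiv.swap_mul_self, one_mul] at this

lemma inv_lt_of_invNum_lt {n : ℕ} {u : Equiv.Perm (Fin n)} {c d : Fin n} (hcd : c < d)
    (h : invNum u < invNum (Equiv.swap c d * u)) : u⁻¹ c < u⁻¹ d := by
  rcases lt_trichotomy (u⁻¹ c) (u⁻¹ d) with h' | h' | h'
  · exact h'
  · exact absurd (u⁻¹.injective h') (ne_of_lt hcd)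
  · exact absurd h (not_lt.mpr (swap_mul_invNum_lt hcd h').le)

lemma inv_gt_of_invNum_lt {n : ℕ} {u : Equiv.Perm (Fin n)} {c d : Fin n} (hcd : c < d)
    (h : invNum (Equiv.swap c d * u) < invNum u) : u⁻¹ d < u⁻¹ c := by
  rcases lt_trichotomy (u⁻¹ d) (u⁻¹ c) with h' | h' | h'
  · exact h'
  · exact absurd (u⁻¹.injective h') (ne_of_gt hcd)
  · exact absurd h (not_lt.mpr (invNum_lt_swap_mul hcd h').le)

lemma wleR_inv_mono {n : ℕ} {u v : Equiv.Perm (Fin n)} (huv : wleR u v) {c d : Fin n}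
    (hcd : c < d) (h : u⁻¹ d < u⁻¹ c) : v⁻¹ d < v⁻¹ c := by
  classical
  rcases lt_trichotomy (v⁻¹ d) (v⁻¹ c) with h' | h' | h'
  · exact h'
  · exact absurd (v⁻¹.injective h') (ne_of_gt hcd)
  · exfalso
    set z := u⁻¹ * v with hz
    have hv : invNum u + invNum z = invNum v := huv
    set i := v⁻¹ c with hi
    set j := v⁻¹ d with hj
    have hij : i < j := h'
    have hvi : v i = c := v.apply_symm_apply c
    have hvj : v j = d := v.apply_symm_apply d
    have hzi : z i = u⁻¹ c := by rw [hz, Equiv.Perm.mul_apply, hvi]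
    have hzj : z j = u⁻¹ d := by rw [hz, Equiv.Perm.mul_apply, hvj]
    have hmemz : (i, j) ∈ invF z := mem_invF.mpr ⟨hij, by show z j < z i; rw [hzi, hzj]; exact h⟩
    set S := invF v with hS
    have hsplit : (S.filter (fun κ => z κ.2 < z κ.1)).card
        + (S.filter (fun κ => ¬ z κ.2 < z κ.1)).card = S.card :=
      Finset.card_filter_add_card_filter_not _
    have h1 : S.filter (fun κ => z κ.2 < z κ.1) ⊆ (invF z).erase (i, j) := by
      intro κ hκ
      obtain ⟨hm, hc⟩ := Finset.mem_filter.mp hκ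
      obtain ⟨hk1, hk2⟩ := mem_invF.mp hm
      refine Finset.mem_erase.mpr ⟨?_, mem_invF.mpr ⟨hk1, hc⟩⟩
      rintro rfl
      simp only at hk2
      rw [hvi, hvj] at hk2
      exact absurd hk2 (not_lt.mpr hcd.le)
    have hcard1 : (S.filter (fun κ => z κ.2 < z κ.1)).card ≤ invNum z - 1 := by
      have hc := Finset.card_le_card h1
      rwa [Finset.card_erase_of_mem hmemz, ← invNum_def] at hc
    have hcard2 : (S.filter (fun κ => ¬ z κ.2 < z κ.1)).card ≤ invNum u := by
      rw [invNum_def]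
      apply Finset.card_le_card_of_injOn (fun κ => (z κ.1, z κ.2))
      · intro κ hκ
        obtain ⟨hm, hc⟩ := Finset.mem_filter.mp hκ
        obtain ⟨hk1, hk2⟩ := mem_invF.mp hm
        have hne : z κ.1 ≠ z κ.2 := fun e => (ne_of_lt hk1) (z.injective e)
        have hlt : z κ.1 < z κ.2 := lt_of_le_of_ne (not_lt.mp hc) hne
        refine mem_invF.mpr ⟨hlt, ?_⟩
        show u (z κ.2) < u (z κ.1)
        have e1 : u (z κ.1) = v κ.1 := by rw [hz, Equiv.Perm.mul_apply, Equiv.Perm.inv_def, Equiv.apply_symm_apply]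
        have e2 : u (z κ.2) = v κ.2 := by rw [hz, Equiv.Perm.mul_apply, Equiv.Perm.inv_def, Equiv.apply_symm_apply]
        rw [e1, e2]; exact hk2
      · rintro ⟨a1, b1⟩ _ ⟨a2, b2⟩ _ he
        obtain ⟨e1, e2⟩ := Prod.mk.injEq .. ▸ he
        exact Prod.ext (z.injective e1) (z.injective e2)
    have hz1 : 1 ≤ invNum z := by
      rw [invNum_def]
      exact Finset.card_pos.mpr ⟨_, hmemz⟩
    have hvS : invNum v = S.card := invNum_def v
    omega

def Phi {n : ℕ} (w u : Equiv.Perm (Fin n)) : ℤ :=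
  ∑ k : Fin n, (k.val : ℤ) * (((w⁻¹ (u k)).val : ℤ))

lemma Phi_swap_mul {n : ℕ} (w u : Equiv.Perm (Fin n)) {c d : Fin n} (hcd : c ≠ d) :
    Phi w (Equiv.swap c d * u) = Phi w u
      + (((u⁻¹ d).val : ℤ) - ((u⁻¹ c).val : ℤ))
        * (((w⁻¹ c).val : ℤ) - ((w⁻¹ d).val : ℤ)) := by
  classical
  set p := u⁻¹ c with hp
  set q := u⁻¹ d with hq
  have hup : u p = c := u.apply_symm_apply c
  have huq : u q = d := u.apply_symm_apply d
  have hpq : p ≠ q := fun e => hcd (by rw [← hup, ← huq, e])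
  have key : Phi w (Equiv.swap c d * u) - Phi w u
      = ∑ k : Fin n, ((k.val : ℤ) * (((w⁻¹ ((Equiv.swap c d) (u k))).val : ℤ))
          - (k.val : ℤ) * (((w⁻¹ (u k)).val : ℤ))) := by
    rw [Finset.sum_sub_distrib]
    rfl
  have hvanish : ∀ k ∈ (Finset.univ : Finset (Fin n)), k ∉ ({p, q} : Finset (Fin n)) →
      ((k.val : ℤ) * (((w⁻¹ ((Equiv.swap c d) (u k))).val : ℤ))
        - (k.val : ℤ) * (((w⁻¹ (u k)).val : ℤ))) = 0 := by
    intro k _ hk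
    simp only [Finset.mem_insert, Finset.mem_singleton, not_or] at hk
    have h1 : u k ≠ c := fun e => hk.1 (by rw [hp, ← e, Equiv.Perm.inv_def, Equiv.symm_apply_apply])
    have h2 : u k ≠ d := fun e => hk.2 (by rw [hq, ← e, Equiv.Perm.inv_def, Equiv.symm_apply_apply])
    rw [Equiv.swap_apply_of_ne_of_ne h1 h2]
    ring
  have hsum : Phi w (Equiv.swap c d * u) - Phi w u
      = ∑ k ∈ ({p, q} : Finset (Fin n)),
          ((k.val : ℤ) * (((w⁻¹ ((Equiv.swap c d) (u k))).val : ℤ))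
            - (k.val : ℤ) * (((w⁻¹ (u k)).val : ℤ))) := by
    rw [key, Finset.sum_subset (Finset.subset_univ _) hvanish]
  rw [Finset.sum_pair hpq] at hsum
  rw [hup, huq, Equiv.swap_apply_left, Equiv.swap_apply_right] at hsum
  linarith [hsum]

lemma Phi_lt {n : ℕ} {w u : Equiv.Perm (Fin n)} {c d : Fin n} (hcd : c < d)
    (hw : w⁻¹ d < w⁻¹ c) (hu : u⁻¹ c < u⁻¹ d) :
    Phi w u < Phi w (Equiv.swap c d * u) := by
  rw [Phi_swap_mul w u (ne_of_lt hcd)]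
  have h1 : (0 : ℤ) < ((u⁻¹ d).val : ℤ) - ((u⁻¹ c).val : ℤ) := by
    have : (u⁻¹ c).val < (u⁻¹ d).val := hu
    omega
  have h2 : (0 : ℤ) < ((w⁻¹ c).val : ℤ) - ((w⁻¹ d).val : ℤ) := by
    have : (w⁻¹ d).val < (w⁻¹ c).val := hw
    omega
  nlinarith

lemma partialProd_zero {n : ℕ} (ts : ℕ → Equiv.Perm (Fin n)) : partialProd ts 0 = 1 := rfl

lemma partialProd_succ {n : ℕ} (ts : ℕ → Equiv.Perm (Fin n)) (r : ℕ) :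
    partialProd ts (r + 1) = ts (r + 1) * partialProd ts r := by
  unfold partialProd
  rw [List.range_succ_eq_map, List.map_cons, List.map_map, List.prod_cons]
  have h0 : ts (r + 1 - 0) = ts (r + 1) := by norm_num
  have h1 : ((fun m => ts (r + 1 - m)) ∘ Nat.succ) = (fun m => ts (r - m)) := by
    funext m
    show ts (r + 1 - (m + 1)) = ts (r - m)
    congr 1
    omega
  rw [h0, h1]

lemma label_data {n : ℕ} {σ τ w : Equiv.Perm (Fin n)} (hσ : wleR σ w) (hτ : wleR τ w)
    {t : Equiv.Perm (Fin n)} (hmem : t ∈ TL σ ∪ TL τ) :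
    ∃ c d : Fin n, c < d ∧ t = Equiv.swap c d ∧ w⁻¹ d < w⁻¹ c := by
  have hx : ∃ ρ, wleR ρ w ∧ t.IsSwap ∧ invNum (t * ρ) < invNum ρ := by
    rcases hmem with hm | hm
    · exact ⟨σ, hσ, hm.1, hm.2⟩
    · exact ⟨τ, hτ, hm.1, hm.2⟩
  obtain ⟨ρ, hρ, ⟨x, y, hxy, rfl⟩, hlen⟩ := hx
  rcases hxy.lt_or_gt with hlt | hlt
  · exact ⟨x, y, hlt, rfl, wleR_inv_mono hρ hlt (inv_gt_of_invNum_lt hlt hlen)⟩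
  · refine ⟨y, x, hlt, Equiv.swap_comm x y, ?_⟩
    rw [Equiv.swap_comm x y] at hlen
    exact wleR_inv_mono hρ hlt (inv_gt_of_invNum_lt hlt hlen)

/-- every transposition reachable by a `(σ,τ)`-Bruhat path is a
left reflection of the join `σ ∨_R τ`. -/
theorem reachable_subset_TL_join {n : ℕ} (σ τ w : Equiv.Perm (Fin n))
    (hjoin : wleR σ w ∧ wleR τ w ∧ ∀ z, wleR σ z → wleR τ z → wleR w z)
    (a b : Fin n) (hab : a < b)
    (ht : BruhatReachable σ τ (Equiv.swap a b)) :
    invNum (Equiv.swap a b * w) < invNum w := by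
  obtain ⟨hσ, hτ, -⟩ := hjoin
  obtain ⟨m, hm, ts, hlab, htm, hinc⟩ := ht
  have key : ∀ r, 1 ≤ r → r ≤ m → Phi w 1 < Phi w (partialProd ts r) := by
    intro r
    induction r with
    | zero => intro h; exact absurd h (by omega)
    | succ r ih =>
      intro _ hrm
      obtain ⟨c, d, hcd, hts, hw⟩ := label_data hσ hτ (hlab (r + 1) (by omega) hrm)
      rw [partialProd_succ, hts]
      rcases Nat.eq_zero_or_pos r with rfl | hr
      · rw [partialProd_zero]
        apply Phi_lt hcd hw
        simpa using hcd
      · have ih' := ih hr (by omega)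
        have hstep : invNum (partialProd ts r) < invNum (partialProd ts (r + 1)) :=
          hinc r hr (by omega)
        rw [partialProd_succ, hts] at hstep
        exact lt_trans ih' (Phi_lt hcd hw (inv_lt_of_invNum_lt hcd hstep))
  have hfin : Phi w 1 < Phi w (Equiv.swap a b) := by
    rw [htm]; exact key m hm le_rfl
  have hident := Phi_swap_mul w (1 : Equiv.Perm (Fin n)) (ne_of_lt hab)
  rw [mul_one] at hident
  simp only [inv_one, Equiv.Perm.one_apply] at hident
  rw [hident] at hfin
  have hba : (0 : ℤ) < (b.val : ℤ) - (a.val : ℤ) := by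
    have : a.val < b.val := hab
    omega
  have hprod : (0 : ℤ) < ((b.val : ℤ) - (a.val : ℤ))
      * (((w⁻¹ a).val : ℤ) - ((w⁻¹ b).val : ℤ)) := by linarith
  have hg : ((w⁻¹ b).val : ℤ) < ((w⁻¹ a).val : ℤ) := by
    rcases mul_pos_iff.mp hprod with ⟨_, h2⟩ | ⟨h1, _⟩
    · linarith
    · linarith
  have hwba : w⁻¹ b < w⁻¹ a := by
    have : (w⁻¹ b).val < (w⁻¹ a).val := by exact_mod_cast hg
    exact this
  exact swap_mul_invNum_lt hab hwba
end
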